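/- Let (H, ⇀, ↼) be a matched pair of actions on a Hopf algebra H. The linear map Φ: H ⊗ H → H ⊗ H, x ⊗ y ↦ x₁ ⊗ x₂y, is bijective with inverse x ⊗ y ↦ x₁ ⊗ S(x₂)y, and it intertwines the double cross product multiplication (x ⊗ y)(z ⊗ w) = x(y₁ ⇀ z₁) ⊗ (y₂ ↼ z₂)w with the smash product multiplication (a ⊗ x)(b ⊗ y) = a •(x₁ ⇀ b) ⊗ x₂y, where a • b = a₁(S(a₂) ⇀ b). That is, Φ((x⊗y)(z⊗w)) = Φ(x⊗y)Φ(z⊗w) in the smash product. -/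

import Mathlib

open TensorProduct Coalgebra HopfAlgebra LinearMap

noncomputable section

variable (k H : Type*) [CommRing k] [Ring H] [HopfAlgebra k H]

/-- `f` is a left `H`-module coalgebra action of the Hopf algebra `H` on itself. -/
structure IsLeftModCoalgAction (f : H ⊗[k] H →ₗ[k] H) : Prop where
  one_act : ∀ a : H, f (1 ⊗ₜ a) = a
  mul_act : ∀ x y a : H, f ((x * y) ⊗ₜ a) = f (x ⊗ₜ f (y ⊗ₜ a))
  counit_act : ∀ x a : H, counit (R := k) (f (x ⊗ₜ a)) = counit (R := k) x * counit (R := k) a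
  comul_act : ∀ (x a : H) {ιx : Type} (rx : Coalgebra.Repr k x ιx) {ιa : Type} (ra : Coalgebra.Repr k a ιa),
      comul (R := k) (f (x ⊗ₜ a)) =
        ∑ i ∈ rx.index, ∑ j ∈ ra.index,
          f (rx.left i ⊗ₜ ra.left j) ⊗ₜ[k] f (rx.right i ⊗ₜ ra.right j)

/-- `g` is a right `H`-module coalgebra action of the Hopf algebra `H` on itself. -/
structure IsRightModCoalgAction (g : H ⊗[k] H →ₗ[k] H) : Prop where
  act_one : ∀ x : H, g (x ⊗ₜ 1) = x
  act_mul : ∀ x a b : H, g (x ⊗ₜ (a * b)) = g (g (x ⊗ₜ a) ⊗ₜ b)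
  counit_act : ∀ x a : H, counit (R := k) (g (x ⊗ₜ a)) = counit (R := k) x * counit (R := k) a
  comul_act : ∀ (x a : H) {ιx : Type} (rx : Coalgebra.Repr k x ιx) {ιa : Type} (ra : Coalgebra.Repr k a ιa),
      comul (R := k) (g (x ⊗ₜ a)) =
        ∑ i ∈ rx.index, ∑ j ∈ ra.index,
          g (rx.left i ⊗ₜ ra.left j) ⊗ₜ[k] g (rx.right i ⊗ₜ ra.right j)

/-- `(H, f, g)` (written `(H, ⇀, ↼)`) is a matched pair of actions on the Hopf algebra `H`:
`f` is a left module coalgebra action, `g` a right module coalgebra action, satisfying the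
matched pair conditions (MP1)–(MP5) and the extra condition `xy = (x₁ ⇀ y₁)(x₂ ↼ y₂)`. -/
structure IsMatchedPairOfActions (f g : H ⊗[k] H →ₗ[k] H) : Prop where
  left_action : IsLeftModCoalgAction k H f
  right_action : IsRightModCoalgAction k H g
  mp1 : ∀ (x a b : H) {ιx : Type} (rx : Coalgebra.Repr k x ιx) {ιa : Type} (ra : Coalgebra.Repr k a ιa),
      f (x ⊗ₜ (a * b)) =
        ∑ i ∈ rx.index, ∑ j ∈ ra.index,
          f (rx.left i ⊗ₜ ra.left j) * f (g (rx.right i ⊗ₜ ra.right j) ⊗ₜ b)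
  mp2 : ∀ x : H, f (x ⊗ₜ 1) = counit (R := k) x • (1 : H)
  mp3 : ∀ (x y a : H) {ιy : Type} (ry : Coalgebra.Repr k y ιy) {ιa : Type} (ra : Coalgebra.Repr k a ιa),
      g ((x * y) ⊗ₜ a) =
        ∑ i ∈ ry.index, ∑ j ∈ ra.index,
          g (x ⊗ₜ f (ry.left i ⊗ₜ ra.left j)) * g (ry.right i ⊗ₜ ra.right j)
  mp4 : ∀ a : H, g ((1 : H) ⊗ₜ a) = counit (R := k) a • (1 : H)
  mp5 : ∀ (x a : H) {ιx : Type} (rx : Coalgebra.Repr k x ιx) {ιa : Type} (ra : Coalgebra.Repr k a ιa),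
      (∑ i ∈ rx.index, ∑ j ∈ ra.index,
        f (rx.left i ⊗ₜ ra.left j) ⊗ₜ[k] g (rx.right i ⊗ₜ ra.right j)) =
      ∑ i ∈ rx.index, ∑ j ∈ ra.index,
        f (rx.right i ⊗ₜ ra.right j) ⊗ₜ[k] g (rx.left i ⊗ₜ ra.left j)
  mp_mul : ∀ (x y : H) {ιx : Type} (rx : Coalgebra.Repr k x ιx) {ιy : Type} (ry : Coalgebra.Repr k y ιy),
      x * y = ∑ i ∈ rx.index, ∑ j ∈ ry.index,
        f (rx.left i ⊗ₜ ry.left j) * g (rx.right i ⊗ₜ ry.right j)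

/-- The braiding operator `r(x ⊗ y) = (x₁ ⇀ y₁) ⊗ (x₂ ↼ y₂)` associated to the pair `(f, g)`. -/
def braidOp (f g : H ⊗[k] H →ₗ[k] H) : H ⊗[k] H →ₗ[k] H ⊗[k] H :=
  TensorProduct.map f g ∘ₗ (tensorTensorTensorComm k H H H H).toLinearMap
    ∘ₗ TensorProduct.map (comul (R := k)) (comul (R := k))


/-- The transmuted multiplication `a • b = a₁ (S(a₂) ⇀ b)` of `H_⇀`, as a linear map. -/
def transMul (f : H ⊗[k] H →ₗ[k] H) : H ⊗[k] H →ₗ[k] H :=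
  LinearMap.mul' k H ∘ₗ lTensor H f ∘ₗ (TensorProduct.assoc k H H H).toLinearMap ∘ₗ
    rTensor H (lTensor H (antipode (R := k)) ∘ₗ comul (R := k))

/-- `Φ : H ⊗ H → H ⊗ H`, `x ⊗ y ↦ x₁ ⊗ x₂ y`. -/
def Phi : H ⊗[k] H →ₗ[k] H ⊗[k] H :=
  lTensor H (LinearMap.mul' k H) ∘ₗ (TensorProduct.assoc k H H H).toLinearMap ∘ₗ
    rTensor H (comul (R := k))

/-- `Ψ : H ⊗ H → H ⊗ H`, `x ⊗ y ↦ x₁ ⊗ S(x₂) y`. -/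
def Psi : H ⊗[k] H →ₗ[k] H ⊗[k] H :=
  lTensor H (LinearMap.mul' k H) ∘ₗ (TensorProduct.assoc k H H H).toLinearMap ∘ₗ
    rTensor H (lTensor H (antipode (R := k)) ∘ₗ comul (R := k))

/-- The double cross product multiplication
`(x ⊗ y)(z ⊗ w) = x(y₁ ⇀ z₁) ⊗ (y₂ ↼ z₂)w` on `H ⊗ H`, as a linear map. -/
def dcpMul (f g : H ⊗[k] H →ₗ[k] H) : (H ⊗[k] H) ⊗[k] (H ⊗[k] H) →ₗ[k] H ⊗[k] H :=
  rTensor H (LinearMap.mul' k H) ∘ₗ (TensorProduct.assoc k H H H).symm.toLinearMap ∘ₗ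
    lTensor H (lTensor H (LinearMap.mul' k H)) ∘ₗ
    lTensor H (TensorProduct.assoc k H H H).toLinearMap ∘ₗ
    lTensor H (rTensor H (braidOp k H f g)) ∘ₗ
    lTensor H (TensorProduct.assoc k H H H).symm.toLinearMap ∘ₗ
    (TensorProduct.assoc k H H (H ⊗[k] H)).toLinearMap

/-- The map `x ⊗ b ↦ (x₁ ⇀ b) ⊗ x₂`. -/
def smashAux (f : H ⊗[k] H →ₗ[k] H) : H ⊗[k] H →ₗ[k] H ⊗[k] H :=
  rTensor H f ∘ₗ (TensorProduct.assoc k H H H).symm.toLinearMap ∘ₗ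
    lTensor H (TensorProduct.comm k H H).toLinearMap ∘ₗ
    (TensorProduct.assoc k H H H).toLinearMap ∘ₗ rTensor H (comul (R := k))

/-- The smash product multiplication `(a ⊗ x)(b ⊗ y) = a •(x₁ ⇀ b) ⊗ x₂ y` of `H_⇀ # H`,
as a linear map. -/
def smashMul (f : H ⊗[k] H →ₗ[k] H) : (H ⊗[k] H) ⊗[k] (H ⊗[k] H) →ₗ[k] H ⊗[k] H :=
  rTensor H (transMul k H f) ∘ₗ (TensorProduct.assoc k H H H).symm.toLinearMap ∘ₗ
    lTensor H (lTensor H (LinearMap.mul' k H)) ∘ₗ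
    lTensor H (TensorProduct.assoc k H H H).toLinearMap ∘ₗ
    lTensor H (rTensor H (smashAux k H f)) ∘ₗ
    lTensor H (TensorProduct.assoc k H H H).symm.toLinearMap ∘ₗ
    (TensorProduct.assoc k H H (H ⊗[k] H)).toLinearMap


universe ur

section Helpers
variable {k H}

lemma phi_tmul (x y : H) {ι : Type*} (r : Coalgebra.Repr k x ι) :
    Phi k H (x ⊗ₜ y) = ∑ i ∈ r.index, r.left i ⊗ₜ[k] (r.right i * y) := by
  simp only [Phi, LinearMap.comp_apply, LinearEquiv.coe_coe, rTensor_tmul, ← r.eq,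
    sum_tmul, map_sum, assoc_tmul, lTensor_tmul, mul'_apply]

lemma psi_tmul (x y : H) {ι : Type*} (r : Coalgebra.Repr k x ι) :
    Psi k H (x ⊗ₜ y) = ∑ i ∈ r.index, r.left i ⊗ₜ[k] (antipode (R := k) (r.right i) * y) := by
  simp only [Psi, LinearMap.comp_apply, LinearEquiv.coe_coe, rTensor_tmul, ← r.eq,
    sum_tmul, map_sum, assoc_tmul, lTensor_tmul, mul'_apply]

lemma sum_counit_smul_right (x : H) {ι : Type*} (r : Coalgebra.Repr k x ι) :
    ∑ i ∈ r.index, counit (R := k) (r.right i) • r.left i = x := by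
  have h := Coalgebra.sum_tmul_counit_eq r
  have h2 := congrArg (TensorProduct.rid k H).toLinearMap h
  simp only [map_sum, LinearEquiv.coe_coe, rid_tmul, one_smul] at h2
  exact h2

lemma sum_counit_smul_left (x : H) {ι : Type*} (r : Coalgebra.Repr k x ι) :
    ∑ i ∈ r.index, counit (R := k) (r.left i) • r.right i = x := by
  have h := Coalgebra.sum_counit_tmul_eq r
  have h2 := congrArg (TensorProduct.lid k H).toLinearMap h
  simp only [map_sum, LinearEquiv.coe_coe, lid_tmul, one_smul] at h2
  exact h2


lemma braid_tmul (f g : H ⊗[k] H →ₗ[k] H) (y z : H) {ιy ιz : Type*} (ry : Coalgebra.Repr k y ιy)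
    (rz : Coalgebra.Repr k z ιz) :
    braidOp k H f g (y ⊗ₜ z) = ∑ i ∈ ry.index, ∑ j ∈ rz.index,
      f (ry.left i ⊗ₜ rz.left j) ⊗ₜ[k] g (ry.right i ⊗ₜ rz.right j) := by
  simp only [braidOp, LinearMap.comp_apply, LinearEquiv.coe_coe, map_tmul, ← ry.eq, ← rz.eq,
    sum_tmul, tmul_sum, map_sum, tensorTensorTensorComm_tmul]
  rw [Finset.sum_comm]

lemma transMul_tmul (f : H ⊗[k] H →ₗ[k] H) (a b : H) {ι : Type*} (ra : Coalgebra.Repr k a ι) :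
    transMul k H f (a ⊗ₜ b) = ∑ i ∈ ra.index,
      ra.left i * f (antipode (R := k) (ra.right i) ⊗ₜ b) := by
  simp only [transMul, LinearMap.comp_apply, LinearEquiv.coe_coe, rTensor_tmul, ← ra.eq,
    map_sum, sum_tmul, lTensor_tmul, assoc_tmul, mul'_apply]

lemma smashAux_tmul (f : H ⊗[k] H →ₗ[k] H) (x b : H) {ι : Type*} (rx : Coalgebra.Repr k x ι) :
    smashAux k H f (x ⊗ₜ b) = ∑ i ∈ rx.index,
      f (rx.left i ⊗ₜ b) ⊗ₜ[k] rx.right i := by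
  simp only [smashAux, LinearMap.comp_apply, LinearEquiv.coe_coe, rTensor_tmul, ← rx.eq,
    map_sum, sum_tmul, lTensor_tmul, assoc_tmul, assoc_symm_tmul, comm_tmul]

lemma dcpMul_tmul (f g : H ⊗[k] H →ₗ[k] H) (x y z w : H) {ιy ιz : Type*} (ry : Coalgebra.Repr k y ιy)
    (rz : Coalgebra.Repr k z ιz) :
    dcpMul k H f g ((x ⊗ₜ y) ⊗ₜ (z ⊗ₜ w)) = ∑ i ∈ ry.index, ∑ j ∈ rz.index,
      (x * f (ry.left i ⊗ₜ rz.left j)) ⊗ₜ[k] (g (ry.right i ⊗ₜ rz.right j) * w) := by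
  simp only [dcpMul, LinearMap.comp_apply, LinearEquiv.coe_coe, assoc_tmul, lTensor_tmul,
    assoc_symm_tmul, rTensor_tmul, braid_tmul f g y z ry rz, map_sum, sum_tmul, tmul_sum,
    mul'_apply]

lemma smashMul_tmul (f : H ⊗[k] H →ₗ[k] H) (a x b v : H) {ι : Type*} (rx : Coalgebra.Repr k x ι) :
    smashMul k H f ((a ⊗ₜ x) ⊗ₜ (b ⊗ₜ v)) = ∑ i ∈ rx.index,
      transMul k H f (a ⊗ₜ f (rx.left i ⊗ₜ b)) ⊗ₜ[k] (rx.right i * v) := by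
  simp only [smashMul, LinearMap.comp_apply, LinearEquiv.coe_coe, assoc_tmul, lTensor_tmul,
    assoc_symm_tmul, rTensor_tmul, smashAux_tmul f x b rx, map_sum, sum_tmul, tmul_sum,
    mul'_apply]

def reprMul {ιa ιb : Type*} (a b : H) (ra : Coalgebra.Repr k a ιa) (rb : Coalgebra.Repr k b ιb) :
    Coalgebra.Repr k (a * b) (ιa × ιb) where
  index := ra.index ×ˢ rb.index
  left := fun p => ra.left p.1 * rb.left p.2
  right := fun p => ra.right p.1 * rb.right p.2
  eq := by
    rw [Finset.sum_product]
    rw [Bialgebra.comul_mul, ← ra.eq, ← rb.eq, Finset.sum_mul_sum]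
    simp [Algebra.TensorProduct.tmul_mul_tmul]

lemma fourleg_tensor {ι κ ιr μ : Type*} (x : H) (r : Coalgebra.Repr k x ι)
    (l : ∀ p : ι, Coalgebra.Repr k (r.left p) κ) (rr : ∀ p : ι, Coalgebra.Repr k (r.right p) ιr)
    (mid : ∀ (p : ι) (s : ιr), Coalgebra.Repr k ((rr p).left s) μ) :
    ∑ p ∈ r.index, ∑ m ∈ (l p).index, ∑ s ∈ (rr p).index,
      (l p).left m ⊗ₜ[k] ((l p).right m ⊗ₜ[k] ((rr p).left s ⊗ₜ[k] (rr p).right s))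
    = ∑ p ∈ r.index, ∑ s ∈ (rr p).index, ∑ n ∈ (mid p s).index,
      r.left p ⊗ₜ[k] ((mid p s).left n ⊗ₜ[k] ((mid p s).right n ⊗ₜ[k] (rr p).right s)) := by
  have h3 := Coalgebra.sum_tmul_tmul_eq r l rr
  have h4 := congrArg (lTensor H (lTensor H (comul (R := k)))) h3
  simp only [map_sum, lTensor_tmul] at h4
  calc ∑ p ∈ r.index, ∑ m ∈ (l p).index, ∑ s ∈ (rr p).index,
      (l p).left m ⊗ₜ[k] ((l p).right m ⊗ₜ[k] ((rr p).left s ⊗ₜ[k] (rr p).right s))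
      = ∑ p ∈ r.index, ∑ m ∈ (l p).index,
          (l p).left m ⊗ₜ[k] ((l p).right m ⊗ₜ[k] comul (R := k) (r.right p)) := by
        refine Finset.sum_congr rfl fun p _ => Finset.sum_congr rfl fun m _ => ?_
        rw [← (rr p).eq, tmul_sum, tmul_sum]
    _ = ∑ p ∈ r.index, ∑ s ∈ (rr p).index,
          r.left p ⊗ₜ[k] ((rr p).left s ⊗ₜ[k] comul (R := k) ((rr p).right s)) := h4
    _ = ∑ p ∈ r.index,
          r.left p ⊗ₜ[k] lTensor H (comul (R := k)) (comul (R := k) (r.right p)) := by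
        refine Finset.sum_congr rfl fun p _ => ?_
        rw [← tmul_sum]
        congr 1
        rw [← (rr p).eq, map_sum]
        simp only [lTensor_tmul]
    _ = ∑ p ∈ r.index,
          r.left p ⊗ₜ[k] (TensorProduct.assoc k H H H)
            (rTensor H (comul (R := k)) (comul (R := k) (r.right p))) := by
        refine Finset.sum_congr rfl fun p _ => ?_
        rw [coassoc_apply]
    _ = ∑ p ∈ r.index, ∑ s ∈ (rr p).index, ∑ n ∈ (mid p s).index,
          r.left p ⊗ₜ[k] ((mid p s).left n ⊗ₜ[k] ((mid p s).right n ⊗ₜ[k] (rr p).right s)) := by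
        refine Finset.sum_congr rfl fun p _ => ?_
        rw [← (rr p).eq, map_sum, map_sum, tmul_sum]
        refine Finset.sum_congr rfl fun s _ => ?_
        rw [rTensor_tmul, ← (mid p s).eq, sum_tmul, map_sum, tmul_sum]
        simp only [assoc_tmul]

/-- Reindex a representation so that its index type lives in an arbitrary universe. -/
def uRepr {ι : Type*} {a : H} (ra : Coalgebra.Repr k a ι) : Coalgebra.Repr k a (Fin ra.index.card) where
  index := Finset.univ
  left := fun i => ra.left (ra.index.equivFin.symm i)
  right := fun i => ra.right (ra.index.equivFin.symm i)
  eq := by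
    rw [← ra.eq]
    calc ∑ i : Fin ra.index.card,
          ra.left (ra.index.equivFin.symm i) ⊗ₜ[k] ra.right (ra.index.equivFin.symm i)
        = ∑ j : {x // x ∈ ra.index},
            ra.left j.1 ⊗ₜ[k] ra.right j.1 :=
          Fintype.sum_equiv ra.index.equivFin.symm _ _ (fun i => rfl)
      _ = ∑ i ∈ ra.index, ra.left i ⊗ₜ[k] ra.right i :=
          Finset.sum_coe_sort ra.index (fun i => ra.left i ⊗ₜ[k] ra.right i)


lemma phi_mulact_tmul (x F c : H) {ι : Type*} (rx : Coalgebra.Repr k x ι)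
    {ιa ιb : Type*} (sa : Finset ιa) (sb : Finset ιb) (L R : ιa → ιb → H)
    (hF : comul (R := k) F = ∑ a ∈ sa, ∑ b ∈ sb, L a b ⊗ₜ[k] R a b) :
    Phi k H ((x * F) ⊗ₜ c) = ∑ p ∈ rx.index, ∑ a ∈ sa, ∑ b ∈ sb,
      (rx.left p * L a b) ⊗ₜ[k] (rx.right p * R a b * c) := by
  simp only [Phi, LinearMap.comp_apply, LinearEquiv.coe_coe, rTensor_tmul,
    Bialgebra.comul_mul, hF, ← rx.eq, Finset.sum_mul, Finset.mul_sum,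
    Algebra.TensorProduct.tmul_mul_tmul, map_sum, sum_tmul, assoc_tmul, lTensor_tmul, mul'_apply]
  refine Eq.trans (Finset.sum_congr rfl fun a _ => by rw [Finset.sum_comm]) ?_
  rw [Finset.sum_comm]

lemma smashAux_mulleft_tmul (f : H ⊗[k] H →ₗ[k] H) (u y b : H)
    {ιu ιy : Type*} (ru : Coalgebra.Repr k u ιu) (ry : Coalgebra.Repr k y ιy) :
    smashAux k H f ((u * y) ⊗ₜ b) = ∑ s ∈ ru.index, ∑ t ∈ ry.index,
      f ((ru.left s * ry.left t) ⊗ₜ b) ⊗ₜ[k] (ru.right s * ry.right t) := by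
  simp only [smashAux, LinearMap.comp_apply, LinearEquiv.coe_coe, rTensor_tmul,
    Bialgebra.comul_mul, ← ru.eq, ← ry.eq, Finset.sum_mul, Finset.mul_sum,
    Algebra.TensorProduct.tmul_mul_tmul, map_sum, sum_tmul, assoc_tmul, lTensor_tmul,
    assoc_symm_tmul, comm_tmul]
  rw [Finset.sum_comm]

lemma smashMul_mul_tmul (f : H ⊗[k] H →ₗ[k] H) (a u y b v : H)
    {ιu ιy : Type*} (ru : Coalgebra.Repr k u ιu) (ry : Coalgebra.Repr k y ιy) :
    smashMul k H f ((a ⊗ₜ (u * y)) ⊗ₜ (b ⊗ₜ v)) = ∑ s ∈ ru.index, ∑ t ∈ ry.index,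
      transMul k H f (a ⊗ₜ f ((ru.left s * ry.left t) ⊗ₜ b)) ⊗ₜ[k]
        (ru.right s * ry.right t * v) := by
  simp only [smashMul, LinearMap.comp_apply, LinearEquiv.coe_coe, assoc_tmul, lTensor_tmul,
    assoc_symm_tmul, rTensor_tmul, smashAux_mulleft_tmul f u y b ru ry, map_sum, sum_tmul,
    tmul_sum, mul'_apply]


def actRepr (f : H ⊗[k] H →ₗ[k] H) (hf : IsLeftModCoalgAction k H f) (u v : H)
    {ιu ιv : Type} (ru : Coalgebra.Repr k u ιu) (rv : Coalgebra.Repr k v ιv) :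
    Coalgebra.Repr k (f (u ⊗ₜ v)) (ιu × ιv) where
  index := ru.index ×ˢ rv.index
  left := fun p => f (ru.left p.1 ⊗ₜ rv.left p.2)
  right := fun p => f (ru.right p.1 ⊗ₜ rv.right p.2)
  eq := by rw [Finset.sum_product]; exact (hf.comul_act u v ru rv).symm

end Helpers

set_option maxHeartbeats 1000000 in
/-- `Φ(x ⊗ y) = x₁ ⊗ x₂y` is bijective with inverse `x ⊗ y ↦ x₁ ⊗ S(x₂)y`,
and intertwines the double cross product multiplication with the smash product
multiplication: `Φ((x⊗y)(z⊗w)) = Φ(x⊗y)Φ(z⊗w)`. -/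
theorem stmt16 (f g : H ⊗[k] H →ₗ[k] H) (h : IsMatchedPairOfActions k H f g) :
    Phi k H ∘ₗ Psi k H = LinearMap.id ∧ Psi k H ∘ₗ Phi k H = LinearMap.id ∧
    Phi k H ∘ₗ dcpMul k H f g = smashMul k H f ∘ₗ TensorProduct.map (Phi k H) (Phi k H) := by
  refine ⟨?_, ?_, ?_⟩
  · apply TensorProduct.ext'
    intro x y
    set r := ℛ k x with hr
    set rl : ∀ i, Coalgebra.Repr k (r.left i) (H × H) := fun i => ℛ k (r.left i) with hrl
    set rr : ∀ i, Coalgebra.Repr k (r.right i) (H × H) := fun i => ℛ k (r.right i) with hrr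
    have h3 := Coalgebra.sum_tmul_tmul_eq r rl rr
    have h4 := congrArg (lTensor H ((LinearMap.mulRight k y) ∘ₗ LinearMap.mul' k H ∘ₗ
        lTensor H (antipode (R := k)))) h3
    simp only [map_sum, lTensor_tmul, LinearMap.comp_apply, mul'_apply, mulRight_apply] at h4
    calc (Phi k H ∘ₗ Psi k H) (x ⊗ₜ[k] y)
        = Phi k H (∑ i ∈ r.index, r.left i ⊗ₜ[k] (antipode (R := k) (r.right i) * y)) := by
          rw [LinearMap.comp_apply, psi_tmul x y r]
      _ = ∑ i ∈ r.index, ∑ j ∈ (rl i).index,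
            (rl i).left j ⊗ₜ[k] ((rl i).right j * antipode (R := k) (r.right i) * y) := by
          rw [map_sum]
          refine Finset.sum_congr rfl fun i _ => ?_
          rw [phi_tmul _ _ (rl i)]
          simp only [mul_assoc]
      _ = ∑ i ∈ r.index, ∑ j ∈ (rr i).index,
            r.left i ⊗ₜ[k] ((rr i).left j * antipode (R := k) ((rr i).right j) * y) := h4
      _ = ∑ i ∈ r.index, counit (R := k) (r.right i) • (r.left i ⊗ₜ[k] y) := by
          refine Finset.sum_congr rfl fun i _ => ?_
          rw [← tmul_sum, ← Finset.sum_mul, sum_mul_antipode_eq_smul (rr i), smul_mul_assoc,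
            one_mul, tmul_smul]
      _ = x ⊗ₜ[k] y := by
          simp only [smul_tmul']
          rw [← sum_tmul, sum_counit_smul_right x r]
  · apply TensorProduct.ext'
    intro x y
    set r := ℛ k x with hr
    set rl : ∀ i, Coalgebra.Repr k (r.left i) (H × H) := fun i => ℛ k (r.left i) with hrl
    set rr : ∀ i, Coalgebra.Repr k (r.right i) (H × H) := fun i => ℛ k (r.right i) with hrr
    have h3 := Coalgebra.sum_tmul_tmul_eq r rl rr
    have h4 := congrArg (lTensor H ((LinearMap.mulRight k y) ∘ₗ LinearMap.mul' k H ∘ₗ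
        rTensor H (antipode (R := k)))) h3
    simp only [map_sum, lTensor_tmul, rTensor_tmul, LinearMap.comp_apply, mul'_apply,
      mulRight_apply] at h4
    calc (Psi k H ∘ₗ Phi k H) (x ⊗ₜ[k] y)
        = Psi k H (∑ i ∈ r.index, r.left i ⊗ₜ[k] (r.right i * y)) := by
          rw [LinearMap.comp_apply, phi_tmul x y r]
      _ = ∑ i ∈ r.index, ∑ j ∈ (rl i).index,
            (rl i).left j ⊗ₜ[k] (antipode (R := k) ((rl i).right j) * r.right i * y) := by
          rw [map_sum]
          refine Finset.sum_congr rfl fun i _ => ?_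
          rw [psi_tmul _ _ (rl i)]
          simp only [mul_assoc]
      _ = ∑ i ∈ r.index, ∑ j ∈ (rr i).index,
            r.left i ⊗ₜ[k] (antipode (R := k) ((rr i).left j) * (rr i).right j * y) := h4
      _ = ∑ i ∈ r.index, counit (R := k) (r.right i) • (r.left i ⊗ₜ[k] y) := by
          refine Finset.sum_congr rfl fun i _ => ?_
          rw [← tmul_sum, ← Finset.sum_mul, sum_antipode_mul_eq_smul (rr i), smul_mul_assoc,
            one_mul, tmul_smul]
      _ = x ⊗ₜ[k] y := by
          simp only [smul_tmul']
          rw [← sum_tmul, sum_counit_smul_right x r]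

  · ext x y z w
    simp only [TensorProduct.AlgebraTensorModule.curry_apply, curry_apply,
      coe_restrictScalars, LinearMap.comp_apply, TensorProduct.map_tmul]
    set rx := ℛ k x with hrx
    set ry := ℛ k y with hry
    set rz := ℛ k z with hrz
    set rxl : ∀ p, Coalgebra.Repr k (rx.left p) (H × H) := fun p => ℛ k (rx.left p) with hrxl
    set rxr : ∀ p, Coalgebra.Repr k (rx.right p) (H × H) := fun p => ℛ k (rx.right p) with hrxr
    set rxm : ∀ p, ∀ s : H × H, Coalgebra.Repr k ((rxr p).left s) (H × H) :=
      fun p s => ℛ k ((rxr p).left s) with hrxm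
    set ryl : ∀ i, Coalgebra.Repr k (ry.left i) (Fin (ℛ k (ry.left i)).index.card) := fun i => uRepr (ℛ k (ry.left i)) with hryl
    set ryr : ∀ i, Coalgebra.Repr k (ry.right i) (Fin (ℛ k (ry.right i)).index.card) := fun i => uRepr (ℛ k (ry.right i)) with hryr
    set rzl : ∀ j, Coalgebra.Repr k (rz.left j) (Fin (ℛ k (rz.left j)).index.card) := fun j => uRepr (ℛ k (rz.left j)) with hrzl
    set rzr : ∀ j, Coalgebra.Repr k (rz.right j) (Fin (ℛ k (rz.right j)).index.card) := fun j => uRepr (ℛ k (rz.right j)) with hrzr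
    calc Phi k H (dcpMul k H f g ((x ⊗ₜ y) ⊗ₜ (z ⊗ₜ w)))
        = ∑ i ∈ ry.index, ∑ j ∈ rz.index, ∑ p ∈ rx.index,
            ∑ a ∈ (ryl i).index, ∑ b ∈ (rzl j).index,
            (rx.left p * f ((ryl i).left a ⊗ₜ (rzl j).left b)) ⊗ₜ[k]
              (rx.right p * f ((ryl i).right a ⊗ₜ (rzl j).right b) *
                (g (ry.right i ⊗ₜ rz.right j) * w)) := by
          rw [dcpMul_tmul f g x y z w ry rz, map_sum]
          refine Finset.sum_congr rfl fun i _ => ?_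
          rw [map_sum]
          refine Finset.sum_congr rfl fun j _ => ?_
          exact phi_mulact_tmul x _ _ rx (ryl i).index (rzl j).index _ _
            (h.left_action.comul_act (ry.left i) (rz.left j) (ryl i) (rzl j))
      _ = ∑ j ∈ rz.index, ∑ p ∈ rx.index, ∑ b ∈ (rzl j).index,
            ∑ i ∈ ry.index, ∑ a ∈ (ryl i).index,
            (rx.left p * f ((ryl i).left a ⊗ₜ (rzl j).left b)) ⊗ₜ[k]
              (rx.right p * f ((ryl i).right a ⊗ₜ (rzl j).right b) *
                (g (ry.right i ⊗ₜ rz.right j) * w)) := by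
          rw [Finset.sum_comm]
          refine Finset.sum_congr rfl fun j _ => ?_
          rw [Finset.sum_comm]
          refine Finset.sum_congr rfl fun p _ => ?_
          refine Eq.trans (Finset.sum_congr rfl fun i _ => by rw [Finset.sum_comm]) ?_
          rw [Finset.sum_comm]
      _ = ∑ j ∈ rz.index, ∑ p ∈ rx.index, ∑ b ∈ (rzl j).index,
            ∑ i ∈ ry.index, ∑ c ∈ (ryr i).index,
            (rx.left p * f (ry.left i ⊗ₜ (rzl j).left b)) ⊗ₜ[k]
              (rx.right p * f ((ryr i).left c ⊗ₜ (rzl j).right b) *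
                (g ((ryr i).right c ⊗ₜ rz.right j) * w)) := by
          refine Finset.sum_congr rfl fun j _ => Finset.sum_congr rfl fun p _ =>
            Finset.sum_congr rfl fun b _ => ?_
          have h3 := Coalgebra.sum_tmul_tmul_eq ry ryl ryr
          have h4 := congrArg (TensorProduct.map
            (LinearMap.mulLeft k (rx.left p) ∘ₗ f ∘ₗ (TensorProduct.mk k H H).flip ((rzl j).left b))
            (LinearMap.mul' k H ∘ₗ TensorProduct.map
              (LinearMap.mulLeft k (rx.right p) ∘ₗ f ∘ₗ (TensorProduct.mk k H H).flip ((rzl j).right b))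
              (LinearMap.mulRight k w ∘ₗ g ∘ₗ (TensorProduct.mk k H H).flip (rz.right j)))) h3
          simpa only [map_sum, TensorProduct.map_tmul, LinearMap.comp_apply, mul'_apply,
            mulLeft_apply, mulRight_apply, mk_apply, flip_apply] using h4
      _ = ∑ p ∈ rx.index, ∑ i ∈ ry.index, ∑ c ∈ (ryr i).index,
            ∑ j ∈ rz.index, ∑ b ∈ (rzl j).index,
            (rx.left p * f (ry.left i ⊗ₜ (rzl j).left b)) ⊗ₜ[k]
              (rx.right p * f ((ryr i).left c ⊗ₜ (rzl j).right b) *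
                (g ((ryr i).right c ⊗ₜ rz.right j) * w)) := by
          rw [Finset.sum_comm]
          refine Finset.sum_congr rfl fun p _ => ?_
          refine Eq.trans (Finset.sum_congr rfl fun j _ => by rw [Finset.sum_comm]) ?_
          refine Eq.trans (Finset.sum_congr rfl fun j _ =>
            Finset.sum_congr rfl fun i _ => by rw [Finset.sum_comm]) ?_
          rw [Finset.sum_comm]
          refine Finset.sum_congr rfl fun i _ => ?_
          rw [Finset.sum_comm]
      _ = ∑ p ∈ rx.index, ∑ i ∈ ry.index, ∑ c ∈ (ryr i).index,
            ∑ j ∈ rz.index, ∑ d ∈ (rzr j).index,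
            (rx.left p * f (ry.left i ⊗ₜ rz.left j)) ⊗ₜ[k]
              (rx.right p * f ((ryr i).left c ⊗ₜ (rzr j).left d) *
                (g ((ryr i).right c ⊗ₜ (rzr j).right d) * w)) := by
          refine Finset.sum_congr rfl fun p _ => Finset.sum_congr rfl fun i _ =>
            Finset.sum_congr rfl fun c _ => ?_
          have h3 := Coalgebra.sum_tmul_tmul_eq rz rzl rzr
          have h4 := congrArg (TensorProduct.map
            (LinearMap.mulLeft k (rx.left p) ∘ₗ f ∘ₗ TensorProduct.mk k H H (ry.left i))
            (LinearMap.mul' k H ∘ₗ TensorProduct.map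
              (LinearMap.mulLeft k (rx.right p) ∘ₗ f ∘ₗ TensorProduct.mk k H H ((ryr i).left c))
              (LinearMap.mulRight k w ∘ₗ g ∘ₗ TensorProduct.mk k H H ((ryr i).right c)))) h3
          simpa only [map_sum, TensorProduct.map_tmul, LinearMap.comp_apply, mul'_apply,
            mulLeft_apply, mulRight_apply, mk_apply] using h4
      _ = ∑ p ∈ rx.index, ∑ i ∈ ry.index, ∑ j ∈ rz.index,
            (rx.left p * f (ry.left i ⊗ₜ rz.left j)) ⊗ₜ[k]
              (rx.right p * (ry.right i * rz.right j * w)) := by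
          refine Finset.sum_congr rfl fun p _ => ?_
          refine Eq.trans (Finset.sum_congr rfl fun i _ => by rw [Finset.sum_comm]) ?_
          refine Finset.sum_congr rfl fun i _ => Finset.sum_congr rfl fun j _ => ?_
          simp only [← tmul_sum]
          congr 1
          calc ∑ c ∈ (ryr i).index, ∑ d ∈ (rzr j).index,
                rx.right p * f ((ryr i).left c ⊗ₜ (rzr j).left d) *
                  (g ((ryr i).right c ⊗ₜ (rzr j).right d) * w)
              = rx.right p * ((∑ c ∈ (ryr i).index, ∑ d ∈ (rzr j).index,
                  f ((ryr i).left c ⊗ₜ (rzr j).left d) *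
                    g ((ryr i).right c ⊗ₜ (rzr j).right d)) * w) := by
                simp only [Finset.mul_sum, Finset.sum_mul, mul_assoc]
            _ = rx.right p * (ry.right i * rz.right j * w) := by
                rw [← h.mp_mul (ry.right i) (rz.right j) (ryr i) (rzr j)]
      _ = ∑ j ∈ rz.index, ∑ i ∈ ry.index, ∑ p ∈ rx.index,
            (rx.left p * f (ry.left i ⊗ₜ rz.left j)) ⊗ₜ[k]
              (rx.right p * (ry.right i * (rz.right j * w))) := by
          simp only [mul_assoc]
          refine Eq.trans (Finset.sum_congr rfl fun p _ => by rw [Finset.sum_comm]) ?_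
          rw [Finset.sum_comm]
          refine Finset.sum_congr rfl fun j _ => by rw [Finset.sum_comm]
      _ = smashMul k H f (Phi k H (x ⊗ₜ y) ⊗ₜ Phi k H (z ⊗ₜ w)) := by
          refine Eq.symm ?_
          calc smashMul k H f (Phi k H (x ⊗ₜ y) ⊗ₜ Phi k H (z ⊗ₜ w))
              = ∑ p ∈ rx.index, ∑ q ∈ rz.index, ∑ s ∈ (rxr p).index, ∑ t ∈ ry.index,
                  ∑ m ∈ (rxl p).index,
                  ((rxl p).left m * f ((antipode (R := k) ((rxl p).right m) *
                      ((rxr p).left s * ry.left t)) ⊗ₜ rz.left q)) ⊗ₜ[k]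
                    ((rxr p).right s * ry.right t * (rz.right q * w)) := by
                rw [phi_tmul x y rx, phi_tmul z w rz, sum_tmul]
                simp only [tmul_sum, map_sum]
                refine Finset.sum_congr rfl fun p _ => Finset.sum_congr rfl fun q _ => ?_
                rw [smashMul_mul_tmul f (rx.left p) (rx.right p) y (rz.left q)
                  (rz.right q * w) (rxr p) ry]
                refine Finset.sum_congr rfl fun s _ => Finset.sum_congr rfl fun t _ => ?_
                rw [transMul_tmul f (rx.left p) _ (rxl p), sum_tmul]
                refine Finset.sum_congr rfl fun m _ => ?_
                rw [← h.left_action.mul_act]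
            _ = ∑ q ∈ rz.index, ∑ t ∈ ry.index, ∑ p ∈ rx.index, ∑ m ∈ (rxl p).index,
                  ∑ s ∈ (rxr p).index,
                  ((rxl p).left m * f ((antipode (R := k) ((rxl p).right m) *
                      ((rxr p).left s * ry.left t)) ⊗ₜ rz.left q)) ⊗ₜ[k]
                    ((rxr p).right s * (ry.right t * (rz.right q * w))) := by
                simp only [mul_assoc]
                refine Eq.trans (Finset.sum_congr rfl fun p _ =>
                  Finset.sum_congr rfl fun q _ => by rw [Finset.sum_comm]) ?_
                refine Eq.trans (Finset.sum_congr rfl fun p _ =>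
                  Finset.sum_congr rfl fun q _ =>
                    Finset.sum_congr rfl fun t _ => by rw [Finset.sum_comm]) ?_
                rw [Finset.sum_comm]
                refine Finset.sum_congr rfl fun q _ => ?_
                rw [Finset.sum_comm]
            _ = ∑ q ∈ rz.index, ∑ t ∈ ry.index, ∑ p ∈ rx.index, ∑ s ∈ (rxr p).index,
                  ∑ n ∈ (rxm p s).index,
                  (rx.left p * f ((antipode (R := k) ((rxm p s).left n) *
                      ((rxm p s).right n * ry.left t)) ⊗ₜ rz.left q)) ⊗ₜ[k]
                    ((rxr p).right s * (ry.right t * (rz.right q * w))) := by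
                refine Finset.sum_congr rfl fun q _ => Finset.sum_congr rfl fun t _ => ?_
                have h3 := fourleg_tensor x rx rxl rxr rxm
                have h4 := congrArg (TensorProduct.map
                    (LinearMap.mul' k H ∘ₗ lTensor H (f ∘ₗ (TensorProduct.mk k H H).flip (rz.left q)))
                    (LinearMap.mulRight k (ry.right t * (rz.right q * w)))
                  ∘ₗ (TensorProduct.assoc k H H H).symm.toLinearMap
                  ∘ₗ lTensor H (rTensor H (LinearMap.mul' k H ∘ₗ
                      TensorProduct.map (antipode (R := k)) (LinearMap.mulRight k (ry.left t))))
                  ∘ₗ lTensor H (TensorProduct.assoc k H H H).symm.toLinearMap) h3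
                simpa only [map_sum, TensorProduct.map_tmul, LinearMap.comp_apply,
                  LinearEquiv.coe_coe, assoc_symm_tmul, lTensor_tmul, rTensor_tmul,
                  mul'_apply, mulLeft_apply, mulRight_apply, mk_apply, flip_apply] using h4
            _ = ∑ q ∈ rz.index, ∑ t ∈ ry.index, ∑ p ∈ rx.index,
                  (rx.left p * f (ry.left t ⊗ₜ rz.left q)) ⊗ₜ[k]
                    (rx.right p * (ry.right t * (rz.right q * w))) := by
                refine Finset.sum_congr rfl fun q _ => Finset.sum_congr rfl fun t _ =>
                  Finset.sum_congr rfl fun p _ => ?_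
                calc ∑ s ∈ (rxr p).index, ∑ n ∈ (rxm p s).index,
                      (rx.left p * f ((antipode (R := k) ((rxm p s).left n) *
                          ((rxm p s).right n * ry.left t)) ⊗ₜ rz.left q)) ⊗ₜ[k]
                        ((rxr p).right s * (ry.right t * (rz.right q * w)))
                    = ∑ s ∈ (rxr p).index, counit (R := k) ((rxr p).left s) •
                        ((rx.left p * f (ry.left t ⊗ₜ rz.left q)) ⊗ₜ[k]
                          ((rxr p).right s * (ry.right t * (rz.right q * w)))) := by
                      refine Finset.sum_congr rfl fun s _ => ?_
                      have e1 : (rx.left p * f (((∑ n ∈ (rxm p s).index,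
                            antipode (R := k) ((rxm p s).left n) * (rxm p s).right n) *
                              ry.left t) ⊗ₜ rz.left q)) ⊗ₜ[k]
                            ((rxr p).right s * (ry.right t * (rz.right q * w)))
                          = ∑ n ∈ (rxm p s).index,
                            (rx.left p * f ((antipode (R := k) ((rxm p s).left n) *
                                ((rxm p s).right n * ry.left t)) ⊗ₜ rz.left q)) ⊗ₜ[k]
                              ((rxr p).right s * (ry.right t * (rz.right q * w))) := by
                        simp only [Finset.sum_mul, sum_tmul, map_sum, Finset.mul_sum, mul_assoc]
                      rw [← e1, sum_antipode_mul_eq_smul (rxm p s)]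
                      simp only [smul_mul_assoc, one_mul, ← smul_tmul', map_smul, mul_smul_comm]
                  _ = (rx.left p * f (ry.left t ⊗ₜ rz.left q)) ⊗ₜ[k]
                        (rx.right p * (ry.right t * (rz.right q * w))) := by
                      conv_rhs => rw [show (rx.right p) = ∑ s ∈ (rxr p).index,
                          counit (R := k) ((rxr p).left s) • (rxr p).right s from
                        (sum_counit_smul_left _ (rxr p)).symm]
                      simp only [Finset.sum_mul, tmul_sum, smul_mul_assoc, tmul_smul]
            _ = ∑ j ∈ rz.index, ∑ i ∈ ry.index, ∑ p ∈ rx.index,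
                  (rx.left p * f (ry.left i ⊗ₜ rz.left j)) ⊗ₜ[k]
                    (rx.right p * (ry.right i * (rz.right j * w))) := rfl

end
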